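/- Let V be a finite set, N : V → Finset V with i ∉ N i and j ∈ N i ↔ i ∈ N j for all i, j ∈ V, f : V → V → ℝ symmetric with f i j = 1 whenever j ∉ N i, and b : V → ℝ. For i ∈ V and M ⊆ V define μ_i(M) = ∏_{j ∈ M \ {i}} f i j, W(M) = Σ_{i ∈ M} μ_i(M) · b_i, and Π(M) = exp(W(M)) / Z with Z = Σ_{M' ⊆ V} exp(W(M')). Let D ⊆ V satisfy N_G(i) ∩ D = ∅ for every i ∈ D, where N_G(i) = ( N i ∪ ⋃_{j ∈ N i} N j ) \ {i}. For B ⊆ V \ D and i ∈ D set p_i(B) = exp(W(B ∪ {i})) / ( exp(W(B ∪ {i})) + exp(W(B)) ). Define the parallel-update transition kernel K_D on subsets of V by K_D(M, M') = ( ∏_{i ∈ D ∩ M'} p_i(M \ D) ) · ( ∏_{i ∈ D \ M'} (1 − p_i(M \ D)) ) if M' \ D = M \ D, and K_D(M, M') = 0 otherwise. Then Π is stationary for K_D: for every M' ⊆ V, Σ_{M ⊆ V} Π(M) · K_D(M, M') = Π(M'). -/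

import Mathlib

/-!
On a decision schedule `D` no two scheduled links are within two hops of each other, so for
`B` disjoint from `D` and `A ⊆ D` the increment `W (B ∪ A ∪ {i}) - W (B ∪ A)` at `i ∈ D \ A`
does not depend on `A`. Hence `W` is additive over `D` on the fibre `{M | M \ D = B}`, and there
`Π` is the product of independent Bernoulli laws on the links of `D` with odds
`exp (W (B ∪ {i}) - W B)`. This is exactly the law from which the kernel resamples `M ∩ D`, and
resampling a block of coordinates from its conditional law preserves `Π`.
-/

open Finset Real

namespace Finset

lemma sum_ite_sdiff_eq_sum_powerset {V M : Type*} [DecidableEq V] [Fintype V] [AddCommMonoid M]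
    {B D : Finset V} (hBD : Disjoint B D) (g : Finset V → M) :
    ∑ S : Finset V, (if B = S \ D then g S else 0) = ∑ A ∈ D.powerset, g (B ∪ A) := by
  rw [← sum_filter]
  refine sum_nbij' (fun S => S ∩ D) (fun A => B ∪ A) (fun S _ => mem_powerset.2 inter_subset_right)
    (fun A hA => ?_) (fun S hS => ?_) (fun A hA => ?_) (fun S hS => ?_)
  · rw [mem_filter, union_sdiff_distrib, sdiff_eq_self_of_disjoint hBD,
      sdiff_eq_empty_iff_subset.2 (mem_powerset.1 hA), union_empty]
    exact ⟨mem_univ _, rfl⟩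
  · rw [(mem_filter.1 hS).2, sdiff_union_inter]
  · rw [union_inter_distrib_right, disjoint_iff_inter_eq_empty.1 hBD,
      inter_eq_left.2 (mem_powerset.1 hA), empty_union]
  · rw [(mem_filter.1 hS).2, sdiff_union_inter]

/-- With `p i = r i / (1 + r i)`: the Bernoulli(`p`) product law gives `s ∩ t` the probability
`∏ i ∈ s ∩ t, r i / ∏ i ∈ s, (1 + r i)`. -/
lemma prod_one_add_mul_prod_inter_mul_prod_sdiff {ι R : Type*} [DecidableEq ι] [CommRing R]
    (s t : Finset ι) {r p : ι → R} (hp : ∀ i ∈ s, (1 + r i) * p i = r i) :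
    (∏ i ∈ s, (1 + r i)) * ((∏ i ∈ s ∩ t, p i) * ∏ i ∈ s \ t, (1 - p i)) = ∏ i ∈ s ∩ t, r i := by
  rw [← prod_inter_mul_prod_sdiff s t, mul_mul_mul_comm, ← prod_mul_distrib, ← prod_mul_distrib,
    prod_congr rfl fun i hi => hp i (mem_inter.1 hi).1,
    prod_congr rfl fun i hi => show (1 + r i) * (1 - p i) = 1 by
      linear_combination -hp i (mem_sdiff.1 hi).1,
    prod_const_one, mul_one]

end Finset

namespace SpatialCSMA

variable {V : Type*} [DecidableEq V]

def successProb (f : V → V → ℝ) (k : V) (S : Finset V) : ℝ :=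
  ∏ j ∈ S.erase k, f k j

def weight (f : V → V → ℝ) (b : V → ℝ) (S : Finset V) : ℝ :=
  ∑ k ∈ S, successProb f k S * b k

def twoHopNbhd (N : V → Finset V) (i : V) : Finset V :=
  (N i ∪ (N i).biUnion N).erase i

def IsDecisionSchedule (N : V → Finset V) (D : Finset V) : Prop :=
  ∀ i ∈ D, twoHopNbhd N i ∩ D = ∅

lemma successProb_insert (f : V → V → ℝ) {k i : V} {S : Finset V} (hk : k ∈ S) (hi : i ∉ S) :
    successProb f k (insert i S) = f k i * successProb f k S := by
  have hik : i ≠ k := fun h => hi (h ▸ hk)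
  rw [successProb, successProb, erase_insert_of_ne hik,
    prod_insert fun h => hi (mem_of_mem_erase h)]

lemma weight_insert_sub (f : V → V → ℝ) (b : V → ℝ) {i : V} {S : Finset V} (hi : i ∉ S) :
    weight f b (insert i S) - weight f b S =
      (∏ j ∈ S, f i j) * b i + ∑ k ∈ S, (f k i - 1) * successProb f k S * b k := by
  rw [weight, weight, sum_insert hi, successProb, erase_insert hi, add_sub_assoc,
    ← sum_sub_distrib]
  congr 1
  refine sum_congr rfl fun k hk => ?_
  rw [successProb_insert f hk hi]
  ring

lemma successProb_congr {N : V → Finset V} {f : V → V → ℝ}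
    (hf_one : ∀ i j, j ∉ N i → f i j = 1) {k : V} {S T : Finset V}
    (hST : ∀ j ∈ N k, j ≠ k → (j ∈ S ↔ j ∈ T)) :
    successProb f k S = successProb f k T := by
  have hfilter : ∀ U : Finset V,
      successProb f k U = ∏ j ∈ (U.erase k).filter (· ∈ N k), f k j := fun U =>
    (prod_filter_of_ne fun j _ hj => by_contra fun hjN => hj (hf_one k j hjN)).symm
  rw [hfilter, hfilter]
  congr 1
  ext j
  simp only [mem_filter, mem_erase]
  by_cases hjN : j ∈ N k
  · by_cases hjk : j = k
    · simp [hjk]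
    · simp [hjN, hjk, hST j hjN hjk]
  · simp [hjN]

lemma weight_insert_sub_congr {N : V → Finset V} {f : V → V → ℝ} (b : V → ℝ)
    (hf : ∀ i j, f i j = f j i) (hf_one : ∀ i j, j ∉ N i → f i j = 1)
    {i : V} {S T : Finset V} (hiS : i ∉ S) (hiT : i ∉ T)
    (hST : ∀ j ∈ twoHopNbhd N i, j ∈ S ↔ j ∈ T) :
    weight f b (insert i S) - weight f b S = weight f b (insert i T) - weight f b T := by
  have hmem : ∀ j ∈ N i ∪ (N i).biUnion N, j ∈ S ↔ j ∈ T := by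
    intro j hj
    by_cases hji : j = i
    · simp [hji, hiS, hiT]
    · exact hST j (mem_erase.2 ⟨hji, hj⟩)
  have hrestrict : ∀ U : Finset V, i ∉ U →
      weight f b (insert i U) - weight f b U =
        (∏ j ∈ U ∩ N i, f i j) * b i + ∑ k ∈ U ∩ N i, (f k i - 1) * successProb f k U * b k := by
    intro U hiU
    rw [weight_insert_sub f b hiU,
      prod_subset inter_subset_left fun j hjU hj =>
        hf_one i j fun hjN => hj (mem_inter.2 ⟨hjU, hjN⟩),
      sum_subset inter_subset_left fun k hkU hk => ?_]
    rw [hf, hf_one i k fun hkN => hk (mem_inter.2 ⟨hkU, hkN⟩)]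
    ring
  have hNi : S ∩ N i = T ∩ N i := by
    ext j
    simp only [mem_inter, and_congr_left_iff]
    exact fun hj => hmem j (mem_union_left _ hj)
  rw [hrestrict S hiS, hrestrict T hiT, hNi]
  refine congrArg _ (sum_congr rfl fun k hk => ?_)
  rw [successProb_congr hf_one fun j hj _ =>
    hmem j (mem_union_right _ (mem_biUnion.2 ⟨k, (mem_inter.1 hk).2, hj⟩))]

namespace IsDecisionSchedule

variable {N : V → Finset V} {D : Finset V}

lemma weight_insert_sub_union (hD : IsDecisionSchedule N D) {f : V → V → ℝ} (b : V → ℝ)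
    (hf : ∀ i j, f i j = f j i) (hf_one : ∀ i j, j ∉ N i → f i j = 1)
    {B A : Finset V} (hBD : Disjoint B D) (hAD : A ⊆ D) {i : V} (hiD : i ∈ D) (hiA : i ∉ A) :
    weight f b (insert i (B ∪ A)) - weight f b (B ∪ A) =
      weight f b (insert i B) - weight f b B := by
  have hiB : i ∉ B := disjoint_right.1 hBD hiD
  refine weight_insert_sub_congr b hf hf_one (notMem_union.2 ⟨hiB, hiA⟩) hiB fun j hj => ?_
  have hjD : j ∉ D := fun hjD => by simpa [hD i hiD] using mem_inter.2 ⟨hj, hjD⟩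
  have hjA : j ∉ A := fun hjA => hjD (hAD hjA)
  simp [hjA]

lemma weight_union (hD : IsDecisionSchedule N D) {f : V → V → ℝ} (b : V → ℝ)
    (hf : ∀ i j, f i j = f j i) (hf_one : ∀ i j, j ∉ N i → f i j = 1)
    {B : Finset V} (hBD : Disjoint B D) {A : Finset V} (hAD : A ⊆ D) :
    weight f b (B ∪ A) = weight f b B + ∑ i ∈ A, (weight f b (insert i B) - weight f b B) := by
  induction A using Finset.induction_on with
  | empty => simp
  | insert i A hiA ih =>
    have hiD : i ∈ D := hAD (mem_insert_self i A)
    have hAD' : A ⊆ D := (subset_insert i A).trans hAD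
    rw [union_insert, sum_insert hiA, ← hD.weight_insert_sub_union b hf hf_one hBD hAD' hiD hiA,
      ih hAD']
    ring

end IsDecisionSchedule

end SpatialCSMA

open SpatialCSMA

theorem spatialCSMA_parallel_update_stationary_general
    {V : Type*} [Fintype V] [DecidableEq V]
    (N : V → Finset V)
    (f : V → V → ℝ) (hf : ∀ i j, f i j = f j i)
    (hf_one : ∀ i j, j ∉ N i → f i j = 1)
    (b : V → ℝ)
    (μ : V → Finset V → ℝ) (hμ : ∀ k S, μ k S = ∏ j ∈ S.erase k, f k j)
    (W : Finset V → ℝ) (hW : ∀ S, W S = ∑ k ∈ S, μ k S * b k)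
    (Z : ℝ)
    (Pi : Finset V → ℝ) (hPi : ∀ S, Pi S = exp (W S) / Z)
    (NG : V → Finset V) (hNG : ∀ i, NG i = (N i ∪ (N i).biUnion N).erase i)
    (D : Finset V) (hD : ∀ i ∈ D, NG i ∩ D = ∅)
    (p : V → Finset V → ℝ)
    (hp : ∀ i B, p i B = exp (W (B ∪ {i})) / (exp (W (B ∪ {i})) + exp (W B)))
    (K : Finset V → Finset V → ℝ)
    (hK : ∀ M M', K M M' =
      if M' \ D = M \ D then
        (∏ i ∈ D ∩ M', p i (M \ D)) * ∏ i ∈ D \ M', (1 - p i (M \ D))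
      else 0) :
    ∀ M' : Finset V, ∑ M : Finset V, Pi M * K M M' = Pi M' := by
  obtain rfl : μ = successProb f := funext fun k => funext (hμ k)
  obtain rfl : W = weight f b := funext hW
  obtain rfl : NG = twoHopNbhd N := funext hNG
  intro M'
  set B := M' \ D
  set r : V → ℝ := fun i => exp (weight f b (insert i B) - weight f b B)
  set C := (∏ i ∈ D ∩ M', p i B) * ∏ i ∈ D \ M', (1 - p i B)
  have hPi_union : ∀ A ⊆ D, Pi (B ∪ A) = Pi B * ∏ i ∈ A, r i := fun A hA => by
    rw [hPi, hPi, IsDecisionSchedule.weight_union hD b hf hf_one sdiff_disjoint hA, exp_add,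
      exp_sum]
    ring
  have hpr : ∀ i, (1 + r i) * p i B = r i := fun i => by
    rw [hp, union_singleton]
    simp only [r, exp_sub]
    field_simp
    ring
  have hK_fibre : ∀ M, Pi M * K M M' = if B = M \ D then Pi M * C else 0 := fun M => by
    split_ifs with h
    · rw [hK, if_pos h, ← h]
    · rw [hK, if_neg h, mul_zero]
  calc ∑ M, Pi M * K M M' = ∑ A ∈ D.powerset, Pi (B ∪ A) * C := by
        simp only [hK_fibre]; exact sum_ite_sdiff_eq_sum_powerset sdiff_disjoint _
    _ = Pi B * ((∏ i ∈ D, (1 + r i)) * C) := by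
        rw [← sum_mul, sum_congr rfl fun A hA => hPi_union A (mem_powerset.1 hA), ← mul_sum,
          prod_one_add]
        ring
    _ = Pi (B ∪ (D ∩ M')) := by
        rw [prod_one_add_mul_prod_inter_mul_prod_sdiff D M' fun i _ => hpr i,
          hPi_union _ inter_subset_left]
    _ = Pi M' := by rw [inter_comm, sdiff_union_inter]

/-- Lemma 3 of the paper: if all links of a decision schedule `D` simultaneously update
their status using the single-site Glauber update probabilities, the resulting
parallel-update Glauber dynamics has the Gibbs measure `Π(M) = exp(W M) / Z` as a
stationary distribution. -/
theorem spatialCSMA_parallel_update_stationary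
    {V : Type*} [Fintype V] [DecidableEq V]
    (N : V → Finset V) (hN_irrefl : ∀ i, i ∉ N i)
    (hN_symm : ∀ i j, j ∈ N i ↔ i ∈ N j)
    (f : V → V → ℝ) (hf : ∀ i j, f i j = f j i)
    (hf_one : ∀ i j, j ∉ N i → f i j = 1)
    (b : V → ℝ)
    (μ : V → Finset V → ℝ) (hμ : ∀ k S, μ k S = ∏ j ∈ S.erase k, f k j)
    (W : Finset V → ℝ) (hW : ∀ S, W S = ∑ k ∈ S, μ k S * b k)
    (Z : ℝ) (hZ : Z = ∑ S : Finset V, exp (W S))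
    (Pi : Finset V → ℝ) (hPi : ∀ S, Pi S = exp (W S) / Z)
    (NG : V → Finset V) (hNG : ∀ i, NG i = (N i ∪ (N i).biUnion N).erase i)
    (D : Finset V) (hD : ∀ i ∈ D, NG i ∩ D = ∅)
    (p : V → Finset V → ℝ)
    (hp : ∀ i B, p i B = exp (W (B ∪ {i})) / (exp (W (B ∪ {i})) + exp (W B)))
    (K : Finset V → Finset V → ℝ)
    (hK : ∀ M M', K M M' =
      if M' \ D = M \ D then
        (∏ i ∈ D ∩ M', p i (M \ D)) * ∏ i ∈ D \ M', (1 - p i (M \ D))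
      else 0) :
    ∀ M' : Finset V, ∑ M : Finset V, Pi M * K M M' = Pi M' :=
  spatialCSMA_parallel_update_stationary_general N f hf hf_one b μ hμ W hW Z Pi hPi NG hNG D hD p hp
    K hK
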